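/- arXiv:2201.00332 — 8 statements merged into one kernel-verified Lean document; each statement's English description precedes it below -/
import Mathlib

section
/- Let v ∈ ℂⁿ and let I₀, I₁, …, I_m be a partition of {1,…,n} such that v_j = 0 iff j ∈ I₀, and v_j = v_k iff j,k lie in a common block I_ℓ. Then the solution space of the linear system (V(v))ᵀ s = 0, where V(v) is the n×n matrix with entries V(v)_{jk} = v_j^k, equals the linear subspace of ℂⁿ defined by the equations ∑_{j∈I_k} s_j = 0 for k = 1,…,m. -/
open Matrix BigOperators

/-- Jacobian determinant of a map `f : ℂ^ι → ℂ^ι` at `x`. -/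
noncomputable def jacDet {ι : Type*} [Fintype ι] [DecidableEq ι]
    (f : (ι → ℂ) → (ι → ℂ)) (x : ι → ℂ) : ℂ :=
  (LinearMap.toMatrix (Pi.basisFun ℂ ι) (Pi.basisFun ℂ ι)
    (fderiv ℂ f x).toLinearMap).det

/-- The map `x ↦ x + φ(Ax)`, with `φ` applied entrywise. -/
noncomputable def phiMap {ι : Type*} [Fintype ι] (A : Matrix ι ι ℂ) (φ : ℂ → ℂ)
    (x : ι → ℂ) : ι → ℂ :=
  fun j => x j + φ (A.mulVec x j)

/-- Domain of definition of `x ↦ x + φ(Ax)` for `φ` defined on `Ω`. -/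
def phiDom {ι : Type*} [Fintype ι] (A : Matrix ι ι ℂ) (Ω : Set ℂ) : Set (ι → ℂ) :=
  {x | ∀ j, A.mulVec x j ∈ Ω}

/-- `(A, φ)` is a good pair: the Jacobian of `x + φ(Ax)` is identically a nonzero constant. -/
def IsGoodPair {ι : Type*} [Fintype ι] [DecidableEq ι]
    (A : Matrix ι ι ℂ) (Ω : Set ℂ) (φ : ℂ → ℂ) : Prop :=
  ∃ c : ℂ, c ≠ 0 ∧ ∀ x ∈ phiDom A Ω, jacDet (phiMap A φ) x = c

/-- A matrix is universal if it forms a good pair with every analytic function. -/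
def IsUniversal {ι : Type*} [Fintype ι] [DecidableEq ι] (A : Matrix ι ι ℂ) : Prop :=
  ∀ (Ω : Set ℂ) (φ : ℂ → ℂ), IsOpen Ω → Ω.Nonempty → IsPreconnected Ω →
    AnalyticOn ℂ φ Ω → (phiDom A Ω).Nonempty → IsGoodPair A Ω φ

/-- The principal minor of `A` indexed by `I`. -/
noncomputable def principalMinor {ι : Type*} [DecidableEq ι] (A : Matrix ι ι ℂ)
    (I : Finset ι) : ℂ :=
  (A.submatrix (fun i : I => (i : ι)) (fun i : I => (i : ι))).det

/-! Grouping the row sums `∑ⱼ vⱼ^(k+1) sⱼ` by blocks turns them into `∑ₗ wₗ^(k+1) Sₗ`, where `wₗ` is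
the common value of `v` on `I ℓ` and `Sₗ` the block sum of `s`; the block `I 0` contributes nothing
since the exponents are positive. The first `m` of these rows form the matrix `(wₗ^(k+1))`, a
Vandermonde matrix times `diag w`, which is invertible since the `wₗ` are distinct and nonzero. -/

theorem Matrix.eq_zero_of_forall_sum_pow_succ_mul_eq_zero {R : Type*} [CommRing R] [IsDomain R]
    {m : ℕ} {w c : Fin m → R} (hw : Function.Injective w) (hw0 : ∀ i, w i ≠ 0)
    (h : ∀ k : Fin m, ∑ i, w i ^ ((k : ℕ) + 1) * c i = 0) : c = 0 := by
  have hwc : (fun i => c i * w i) = 0 :=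
    eq_zero_of_forall_pow_sum_mul_pow_eq_zero hw fun k => by
      simpa only [pow_succ, mul_assoc, mul_comm, mul_left_comm] using h k
  funext i
  exact (mul_eq_zero.mp (congrFun hwc i)).resolve_right (hw0 i)

section Blocks

variable {α R : Type*} {m : ℕ} {I : Fin (m + 1) → Finset α}

theorem eq_of_mem_of_mem_of_disjoint (hdisj : ∀ j k, j ≠ k → Disjoint (I j) (I k))
    {ℓ ℓ' : Fin (m + 1)} {a : α} (h : a ∈ I ℓ) (h' : a ∈ I ℓ') : ℓ = ℓ' := by
  by_contra hne
  exact Finset.disjoint_left.mp (hdisj ℓ ℓ' hne) h h'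

theorem sum_mul_eq_sum_blocks [Fintype α] [DecidableEq α] [CommSemiring R]
    (hdisj : ∀ j k, j ≠ k → Disjoint (I j) (I k)) (hunion : Finset.univ.biUnion I = Finset.univ)
    {f s : α → R} {w : Fin m → R} (h0 : ∀ a ∈ I 0, f a = 0)
    (hw : ∀ i, ∀ a ∈ I i.succ, f a = w i) :
    ∑ a, f a * s a = ∑ i, w i * ∑ a ∈ I i.succ, s a := by
  rw [← hunion, Finset.sum_biUnion fun ℓ _ ℓ' _ h => hdisj ℓ ℓ' h, Fin.sum_univ_succ,
    Finset.sum_eq_zero fun a ha => by rw [h0 a ha, zero_mul], zero_add]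
  refine Finset.sum_congr rfl fun i _ => ?_
  rw [Finset.mul_sum]
  exact Finset.sum_congr rfl fun a ha => by rw [hw i a ha]

variable {v : α → R} {r : Fin m → α}

theorem injective_comp_of_mem_blocks (hdisj : ∀ j k, j ≠ k → Disjoint (I j) (I k))
    (heq : ∀ a b, v a = v b ↔ ∃ ℓ, a ∈ I ℓ ∧ b ∈ I ℓ) (hr : ∀ i, r i ∈ I i.succ) :
    Function.Injective (v ∘ r) := by
  intro i i' h
  obtain ⟨ℓ, hi, hi'⟩ := (heq (r i) (r i')).mp h
  exact Fin.succ_injective _ <|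
    (eq_of_mem_of_mem_of_disjoint hdisj (hr i) hi).trans
      (eq_of_mem_of_mem_of_disjoint hdisj (hr i') hi').symm

theorem ne_zero_of_mem_blocks [Zero R] (hdisj : ∀ j k, j ≠ k → Disjoint (I j) (I k))
    (hzero : ∀ a, v a = 0 ↔ a ∈ I 0) {i : Fin m} {a : α} (ha : a ∈ I i.succ) : v a ≠ 0 :=
  fun h => Fin.succ_ne_zero i (eq_of_mem_of_mem_of_disjoint hdisj ha ((hzero a).mp h))

end Blocks

theorem stmt0 (n m : ℕ) (v : Fin n → ℂ) (I : Fin (m + 1) → Finset (Fin n))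
    (hdisj : ∀ j k, j ≠ k → Disjoint (I j) (I k))
    (hunion : Finset.univ.biUnion I = Finset.univ)
    (hne : ∀ ℓ : Fin (m + 1), ℓ ≠ 0 → (I ℓ).Nonempty)
    (hzero : ∀ j, v j = 0 ↔ j ∈ I 0)
    (heq : ∀ j k, v j = v k ↔ ∃ ℓ, j ∈ I ℓ ∧ k ∈ I ℓ)
    (s : Fin n → ℂ) :
    (Matrix.of fun j k : Fin n => v j ^ ((k : ℕ) + 1)).transpose.mulVec s = 0 ↔
      ∀ ℓ : Fin (m + 1), ℓ ≠ 0 → ∑ j ∈ I ℓ, s j = 0 := by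
  choose r hr using fun i : Fin m => hne i.succ (Fin.succ_ne_zero i)
  have hinj := injective_comp_of_mem_blocks hdisj heq hr
  have hmn : m ≤ n := by simpa using Fintype.card_le_of_injective r hinj.of_comp
  have key (k : Fin n) : ((of fun j k : Fin n => v j ^ ((k : ℕ) + 1))ᵀ *ᵥ s) k =
      ∑ i, v (r i) ^ ((k : ℕ) + 1) * ∑ j ∈ I i.succ, s j :=
    sum_mul_eq_sum_blocks (f := fun a => v a ^ ((k : ℕ) + 1)) hdisj hunion
      (fun a ha => by rw [(hzero a).mpr ha, zero_pow (Nat.succ_ne_zero _)])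
      (fun i a ha => by rw [(heq a (r i)).mpr ⟨_, ha, hr i⟩])
  constructor
  · intro h ℓ hℓ
    obtain ⟨i, rfl⟩ := Fin.exists_succ_eq.mpr hℓ
    refine congrFun (eq_zero_of_forall_sum_pow_succ_mul_eq_zero
      (c := fun i => ∑ j ∈ I i.succ, s j) hinj
      (fun i => ne_zero_of_mem_blocks hdisj hzero (hr i)) fun k => ?_) i
    simpa only [key, Fin.val_castLE, Function.comp_apply, Pi.zero_apply] using
      congrFun h (Fin.castLE hmn k)
  · intro h
    funext k
    simp only [key, h _ (Fin.succ_ne_zero _), mul_zero, Finset.sum_const_zero, Pi.zero_apply]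
end

section
/- For any v ∈ (ℂ*)ⁿ, every solution s ∈ ℂⁿ of the linear system (V(v))ᵀ s = 0, where V(v)_{jk} = v_j^k, satisfies s₁ + s₂ + ⋯ + s_n = 0. -/
open Matrix BigOperators

theorem stmt1 (n : ℕ) (v : Fin n → ℂ) (hv : ∀ j, v j ≠ 0) (s : Fin n → ℂ)
    (hs : (Matrix.of fun j k : Fin n => v j ^ ((k : ℕ) + 1)).transpose.mulVec s = 0) :
    ∑ j, s j = 0 := by
  classical
  have key : ∀ k : Fin n, ∑ j, s j * v j ^ ((k : ℕ) + 1) = 0 := by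
    intro k
    have h := congrFun hs k
    simp only [Matrix.mulVec, dotProduct, Matrix.transpose_apply, Matrix.of_apply,
      Pi.zero_apply] at h
    rw [← h]
    exact Finset.sum_congr rfl (fun j _ => mul_comm _ _)
  set p : Polynomial ℂ := ∏ j, (Polynomial.X - Polynomial.C (v j)) with hp
  have hdeg : p.natDegree ≤ n := by
    rw [hp]
    refine le_trans (Polynomial.natDegree_prod_le _ _) ?_
    simp [Polynomial.natDegree_X_sub_C]
  have heval : ∀ j, p.eval (v j) = 0 := by
    intro j
    rw [hp, Polynomial.eval_prod]
    exact Finset.prod_eq_zero (Finset.mem_univ j) (by simp)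
  have hexpand : ∀ j, p.eval (v j) = ∑ k ∈ Finset.range (n + 1), p.coeff k * v j ^ k := by
    intro j
    exact Polynomial.eval_eq_sum_range' (lt_of_le_of_lt hdeg (Nat.lt_succ_self n)) _
  have hsum : (0 : ℂ) = ∑ k ∈ Finset.range (n + 1), p.coeff k * ∑ j, s j * v j ^ k := by
    calc (0 : ℂ) = ∑ j, s j * p.eval (v j) := by simp [heval]
      _ = ∑ j, ∑ k ∈ Finset.range (n + 1), s j * (p.coeff k * v j ^ k) := by
          refine Finset.sum_congr rfl (fun j _ => ?_)
          rw [hexpand j, Finset.mul_sum]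
      _ = ∑ k ∈ Finset.range (n + 1), p.coeff k * ∑ j, s j * v j ^ k := by
          rw [Finset.sum_comm]
          refine Finset.sum_congr rfl (fun k _ => ?_)
          rw [Finset.mul_sum]
          exact Finset.sum_congr rfl (fun j _ => by ring)
  have hsum2 : (0 : ℂ) = p.coeff 0 * ∑ j, s j := by
    rw [hsum]
    refine Finset.sum_eq_single 0 ?_ (by simp) |>.trans (by simp)
    intro k hk hk0
    obtain ⟨m, rfl⟩ := Nat.exists_eq_succ_of_ne_zero hk0
    have hm : m < n := by simp at hk; omega
    have := key ⟨m, hm⟩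
    simp only [Nat.succ_eq_add_one]
    rw [show ((⟨m, hm⟩ : Fin n) : ℕ) = m from rfl] at this
    rw [this, mul_zero]
  have hc0 : p.coeff 0 ≠ 0 := by
    have : p.coeff 0 = p.eval 0 := by simp [Polynomial.coeff_zero_eq_eval_zero]
    rw [this, hp, Polynomial.eval_prod]
    refine Finset.prod_ne_zero_iff.mpr (fun j _ => ?_)
    simp [hv j]
  have := hsum2.symm
  rcases mul_eq_zero.mp this with h | h
  · exact absurd h hc0
  · exact h
end

section
/- A square complex matrix is permutation-similar to a strictly upper triangular matrix if and only if all of its principal minors vanish. -/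
open Matrix BigOperators

section Aux

variable {n : ℕ} (A : Matrix (Fin n) (Fin n) ℂ)

private lemma minor_zero
    (σ : Equiv.Perm (Fin n)) (hσ : ∀ j k : Fin n, k ≤ j → A (σ j) (σ k) = 0)
    (I : Finset (Fin n)) (hI : I.Nonempty) : principalMinor A I = 0 := by
  haveI : Nonempty ↥I := hI.to_subtype
  rw [principalMinor, Matrix.det_apply]
  refine Finset.sum_eq_zero fun τ _ => ?_
  obtain ⟨a₀, -, ha₀⟩ := Finset.exists_min_image (Finset.univ : Finset ↥I)
      (fun a => σ.symm (a : Fin n)) Finset.univ_nonempty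
  have h0 : A ((τ a₀ : ↥I) : Fin n) ((a₀ : ↥I) : Fin n) = 0 := by
    have h1 := hσ (σ.symm ((τ a₀ : ↥I) : Fin n)) (σ.symm ((a₀ : ↥I) : Fin n))
      (ha₀ (τ a₀) (Finset.mem_univ _))
    simpa using h1
  have h2 : ∏ i : ↥I,
      A.submatrix (fun i : ↥I => (i : Fin n)) (fun i : ↥I => (i : Fin n)) (τ i) i = 0 :=
    Finset.prod_eq_zero (Finset.mem_univ a₀) (by simpa using h0)
  rw [h2, smul_zero]

private lemma exists_sink
    (H : ∀ I : Finset (Fin n), I.Nonempty → principalMinor A I = 0) :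
    ∀ I : Finset (Fin n), I.Nonempty → ∃ i ∈ I, ∀ j ∈ I, A i j = 0 := by
  intro I
  induction I using Finset.strongInduction with
  | _ I IH =>
  intro hI
  by_contra hcon
  push_neg at hcon
  haveI : Nonempty ↥I := hI.to_subtype
  have hch : ∀ x : ↥I, ∃ y : ↥I, A (x : Fin n) (y : Fin n) ≠ 0 := by
    intro x
    obtain ⟨j, hj, h⟩ := hcon x x.2
    exact ⟨⟨j, hj⟩, h⟩
  choose g hg using hch
  -- a periodic point
  obtain ⟨y, m, hm, hmy⟩ : ∃ y : ↥I, ∃ m, 0 < m ∧ g^[m] y = y := by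
    obtain ⟨a, b, hab, heq⟩ := Finite.exists_ne_map_eq_of_infinite
      (fun k : ℕ => g^[k] (Classical.arbitrary ↥I))
    have key : ∀ a b : ℕ, a < b →
        g^[a] (Classical.arbitrary ↥I) = g^[b] (Classical.arbitrary ↥I) →
        ∃ y : ↥I, ∃ m, 0 < m ∧ g^[m] y = y := by
      intro a b h he
      refine ⟨g^[a] (Classical.arbitrary ↥I), b - a, by omega, ?_⟩
      rw [← Function.iterate_add_apply, Nat.sub_add_cancel h.le]
      exact he.symm
    rcases hab.lt_or_gt with h | h
    · exact key a b h heq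
    · exact key b a h heq.symm
  have hex : ∃ m, 0 < m ∧ g^[m] y = y := ⟨m, hm, hmy⟩
  set m₀ := Nat.find hex with hm₀def
  obtain ⟨hm₀pos, hm₀⟩ := Nat.find_spec hex
  have hmin : ∀ k, 0 < k → k < m₀ → g^[k] y ≠ y := fun k hk hkm he =>
    Nat.find_min hex hkm ⟨hk, he⟩
  have horb : ∀ a b, a < b → b < m₀ → g^[a] y ≠ g^[b] y := by
    intro a b hab hb he
    apply hmin (m₀ - b + a) (by omega) (by omega)
    rw [Function.iterate_add_apply, he, ← Function.iterate_add_apply,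
      Nat.sub_add_cancel hb.le, hm₀]
  set J : Finset (Fin n) := (Finset.range m₀).image (fun k => ((g^[k] y : ↥I) : Fin n))
    with hJdef
  have hJI : J ⊆ I := by
    intro x hx
    simp only [hJdef, Finset.mem_image, Finset.mem_range] at hx
    obtain ⟨k, -, rfl⟩ := hx
    exact (g^[k] y).2
  have hJne : J.Nonempty := ⟨(y : Fin n), by
    simp only [hJdef, Finset.mem_image, Finset.mem_range]
    exact ⟨0, hm₀pos, rfl⟩⟩
  by_cases hJeq : J = I
  · -- J = I : the orbit covers I, build the cyclic permutation and a nonzero minor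
    have hcover : ∀ x : ↥I, ∃ k, k < m₀ ∧ g^[k] y = x := by
      intro x
      have : (x : Fin n) ∈ J := by rw [hJeq]; exact x.2
      simp only [hJdef, Finset.mem_image, Finset.mem_range] at this
      obtain ⟨k, hk, he⟩ := this
      exact ⟨k, hk, Subtype.coe_injective he⟩
    have hmul : ∀ q, g^[m₀ * q] y = y := by
      intro q
      induction q with
      | zero => simp
      | succ q ih =>
        rw [Nat.mul_succ, Function.iterate_add_apply, hm₀, ih]
    have hper : ∀ t, g^[t] y = g^[t % m₀] y := by
      intro t
      conv_lhs => rw [← Nat.mod_add_div t m₀, Function.iterate_add_apply, hmul]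
    have hid : ∀ x : ↥I, g^[m₀] x = x := by
      intro x
      obtain ⟨k, -, he⟩ := hcover x
      rw [← he, ← Function.iterate_add_apply, Nat.add_comm, Function.iterate_add_apply, hm₀]
    have ginj : Function.Injective g := by
      intro a b he
      have h1 : g^[(m₀ - 1) + 1] a = g^[(m₀ - 1) + 1] b := by
        rw [Function.iterate_succ_apply, Function.iterate_succ_apply, he]
      rw [show m₀ - 1 + 1 = m₀ from by omega, hid, hid] at h1
      exact h1
    have gsurj : Function.Surjective g := by
      intro x
      refine ⟨g^[m₀ - 1] x, ?_⟩
      rw [← Function.iterate_succ_apply' g (m₀ - 1) x,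
        show (m₀ - 1).succ = m₀ from by omega, hid]
    set gp : Equiv.Perm ↥I := Equiv.ofBijective g ⟨ginj, gsurj⟩ with hgp
    have hcard : I.card = m₀ := by
      rw [← hJeq, hJdef, Finset.card_image_of_injOn, Finset.card_range]
      intro a ha b hb he
      simp only [Finset.mem_coe, Finset.mem_range] at ha hb
      by_contra hne
      rcases Nat.lt_or_ge a b with h | h
      · exact horb a b h hb (Subtype.coe_injective he)
      · exact horb b a (by omega) ha (Subtype.coe_injective he.symm)
    -- cover from an arbitrary start point
    have hcover2 : ∀ b x : ↥I, ∃ k, k < m₀ ∧ g^[k] b = x := by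
      intro b x
      obtain ⟨i, hi, rfl⟩ := hcover b
      obtain ⟨j, hj, rfl⟩ := hcover x
      refine ⟨(j + (m₀ - i)) % m₀, Nat.mod_lt _ hm₀pos, ?_⟩
      rw [← Function.iterate_add_apply, hper]
      have : ((j + (m₀ - i)) % m₀ + i) % m₀ = j % m₀ := by
        rw [Nat.add_mod, Nat.mod_mod_of_dvd]
        · rw [← Nat.add_mod, show j + (m₀ - i) + i = j + m₀ from by omega,
            Nat.add_mod_right]
        · exact dvd_refl m₀
      rw [this, ← hper]
    -- every permutation other than `gp` contributes zero to the minor on I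
    have hterm : ∀ τ : Equiv.Perm ↥I, τ ≠ gp →
        ∏ x : ↥I, A (x : Fin n) ((τ x : ↥I) : Fin n) = 0 := by
      intro τ hτ
      by_contra hne
      have hall : ∀ x : ↥I, A (x : Fin n) ((τ x : ↥I) : Fin n) ≠ 0 := fun x hx0 =>
        hne (Finset.prod_eq_zero (Finset.mem_univ x) hx0)
      have hea : ∃ a : ↥I, τ a ≠ g a := by
        by_contra h
        push_neg at h
        exact hτ (Equiv.ext h)
      obtain ⟨a, ha⟩ := hea
      set b : ↥I := τ a with hb
      obtain ⟨k, hk, hkb⟩ := hcover2 b a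
      have hk1 : k + 1 < m₀ := by
        rcases Nat.lt_or_ge (k + 1) m₀ with h | h
        · exact h
        · exfalso
          have hkeq : k = m₀ - 1 := by omega
          apply ha
          have h2 : g^[m₀ - 1] b = a := by rw [← hkeq]; exact hkb
          have h3 : g^[m₀ - 1 + 1] b = g a := by
            rw [Function.iterate_succ_apply', h2]
          rw [show m₀ - 1 + 1 = m₀ from by omega, hid] at h3
          exact h3
      set K : Finset (Fin n) :=
        insert (a : Fin n) ((Finset.range k).image (fun j => ((g^[j] b : ↥I) : Fin n)))
        with hK
      have hKI : K ⊆ I := by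
        intro x hx
        simp only [hK, Finset.mem_insert, Finset.mem_image, Finset.mem_range] at hx
        rcases hx with rfl | ⟨j, -, rfl⟩
        · exact a.2
        · exact (g^[j] b).2
      have hKcard : K.card < I.card := by
        calc K.card ≤ _ + 1 := Finset.card_insert_le _ _
        _ ≤ k + 1 := by
          have := Finset.card_image_le (s := Finset.range k)
            (f := fun j => ((g^[j] b : ↥I) : Fin n))
          simpa [Finset.card_range] using this
        _ < m₀ := hk1
        _ = I.card := hcard.symm
      have hKss : K ⊂ I := hKI.ssubset_of_ne (fun h => absurd hKcard (by rw [h]; exact lt_irrefl _))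
      have hKne : K.Nonempty := ⟨(a : Fin n), Finset.mem_insert_self _ _⟩
      obtain ⟨i, hiK, hrow⟩ := IH K hKss hKne
      have hbK : ((b : ↥I) : Fin n) ∈ K := by
        rcases Nat.eq_zero_or_pos k with h0 | h0
        · have : b = a := by rw [h0] at hkb; exact hkb
          rw [this]
          exact Finset.mem_insert_self _ _
        · apply Finset.mem_insert_of_mem
          exact Finset.mem_image.mpr ⟨0, Finset.mem_range.mpr h0, rfl⟩
      simp only [hK, Finset.mem_insert, Finset.mem_image, Finset.mem_range] at hiK
      rcases hiK with rfl | ⟨j, hj, rfl⟩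
      · exact hall a (hrow _ hbK)
      · -- i = g^[j] b with j < k
        have hnext : ((g^[j + 1] b : ↥I) : Fin n) ∈ K := by
          rcases Nat.lt_or_ge (j + 1) k with h | h
          · exact Finset.mem_insert_of_mem
              (Finset.mem_image.mpr ⟨j + 1, Finset.mem_range.mpr h, rfl⟩)
          · have : j + 1 = k := by omega
            rw [this, hkb]
            exact Finset.mem_insert_self _ _
        have := hrow _ hnext
        rw [Function.iterate_succ_apply'] at this
        exact hg (g^[j] b) this
    -- compute the minor on I
    have hdetI : principalMinor A I ≠ 0 := by
      rw [principalMinor, ← Matrix.det_transpose, Matrix.det_apply]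
      rw [Finset.sum_eq_single gp]
      · have hprodne : ∏ x : ↥I, A (x : Fin n) ((gp x : ↥I) : Fin n) ≠ 0 :=
          Finset.prod_ne_zero_iff.mpr fun x _ => hg x
        have hsimp : ∏ x : ↥I,
            (A.submatrix (fun i : ↥I => (i : Fin n)) (fun i : ↥I => (i : Fin n)))ᵀ (gp x) x
            = ∏ x : ↥I, A (x : Fin n) ((gp x : ↥I) : Fin n) := by
          simp [Matrix.transpose_apply]
        rw [hsimp]
        rcases Int.units_eq_one_or (Equiv.Perm.sign gp) with h | h <;> rw [h]
        · simpa using hprodne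
        · simpa using hprodne
      · intro τ _ hτ
        have h0 := hterm τ hτ
        have hsimp : ∏ x : ↥I,
            (A.submatrix (fun i : ↥I => (i : Fin n)) (fun i : ↥I => (i : Fin n)))ᵀ (τ x) x
            = ∏ x : ↥I, A (x : Fin n) ((τ x : ↥I) : Fin n) := by
          simp [Matrix.transpose_apply]
        rw [hsimp, h0, smul_zero]
      · intro h
        exact absurd (Finset.mem_univ gp) h
    exact hdetI (H I hI)
  · -- J ⊂ I : apply the induction hypothesis to J
    have hss : J ⊂ I := hJI.ssubset_of_ne hJeq
    obtain ⟨i, hiJ, hrow⟩ := IH J hss hJne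
    simp only [hJdef, Finset.mem_image, Finset.mem_range] at hiJ
    obtain ⟨k, hk, rfl⟩ := hiJ
    have hnext : ((g^[k + 1] y : ↥I) : Fin n) ∈ J := by
      rcases Nat.lt_or_ge (k + 1) m₀ with h | h
      · simp only [hJdef, Finset.mem_image, Finset.mem_range]
        exact ⟨k + 1, h, rfl⟩
      · have : k + 1 = m₀ := by omega
        rw [this, hm₀]
        simp only [hJdef, Finset.mem_image, Finset.mem_range]
        exact ⟨0, hm₀pos, rfl⟩
    have := hrow _ hnext
    rw [Function.iterate_succ_apply'] at this
    exact hg (g^[k] y) this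

private lemma exists_emb
    (hs : ∀ I : Finset (Fin n), I.Nonempty → ∃ i ∈ I, ∀ j ∈ I, A i j = 0) :
    ∀ (m : ℕ) (I : Finset (Fin n)), I.card = m →
      ∃ e : Fin m → Fin n, Function.Injective e ∧ (∀ j, e j ∈ I) ∧
        ∀ j k : Fin m, k ≤ j → A (e j) (e k) = 0 := by
  intro m
  induction m with
  | zero =>
    intro I _
    exact ⟨Fin.elim0, fun x => x.elim0, fun x => x.elim0, fun x => x.elim0⟩
  | succ m IH =>
    intro I hI
    have hne : I.Nonempty := Finset.card_pos.mp (by omega)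
    obtain ⟨i, hiI, hrow⟩ := hs I hne
    obtain ⟨e', he'inj, he'mem, he'prop⟩ := IH (I.erase i)
      (by rw [Finset.card_erase_of_mem hiI, hI]; omega)
    refine ⟨Fin.snoc e' i, ?_, ?_, ?_⟩
    · intro x y hxy
      induction x using Fin.lastCases with
      | last =>
        induction y using Fin.lastCases with
        | last => rfl
        | cast y =>
          rw [Fin.snoc_last, Fin.snoc_castSucc] at hxy
          exact absurd hxy.symm (Finset.ne_of_mem_erase (he'mem y))
      | cast x =>
        induction y using Fin.lastCases with
        | last =>
          rw [Fin.snoc_last, Fin.snoc_castSucc] at hxy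
          exact absurd hxy (Finset.ne_of_mem_erase (he'mem x))
        | cast y =>
          rw [Fin.snoc_castSucc, Fin.snoc_castSucc] at hxy
          rw [he'inj hxy]
    · intro j
      induction j using Fin.lastCases with
      | last => rw [Fin.snoc_last]; exact hiI
      | cast j => rw [Fin.snoc_castSucc]; exact Finset.mem_of_mem_erase (he'mem j)
    · intro j k hkj
      induction j using Fin.lastCases with
      | last =>
        rw [Fin.snoc_last]
        induction k using Fin.lastCases with
        | last => rw [Fin.snoc_last]; exact hrow i hiI
        | cast k =>
          rw [Fin.snoc_castSucc]
          exact hrow _ (Finset.mem_of_mem_erase (he'mem k))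
      | cast j =>
        induction k using Fin.lastCases with
        | last =>
          exact absurd hkj (not_le.mpr (Fin.castSucc_lt_last j))
        | cast k =>
          rw [Fin.snoc_castSucc, Fin.snoc_castSucc]
          exact he'prop j k (Fin.castSucc_le_castSucc_iff.mp hkj)

end Aux

theorem stmt2 (n : ℕ) (A : Matrix (Fin n) (Fin n) ℂ) :
    (∃ σ : Equiv.Perm (Fin n), ∀ j k : Fin n, k ≤ j → A (σ j) (σ k) = 0) ↔
      ∀ I : Finset (Fin n), I.Nonempty → principalMinor A I = 0 := by
  constructor
  · rintro ⟨σ, hσ⟩ I hI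
    exact minor_zero A σ hσ I hI
  · intro H
    obtain ⟨e, hinj, -, hprop⟩ := exists_emb A (exists_sink A H) n Finset.univ
      (by simp)
    refine ⟨Equiv.ofBijective e ((Fintype.bijective_iff_injective_and_card e).mpr
      ⟨hinj, rfl⟩), fun j k h => hprop j k h⟩
end

section
/- A 2×2 complex matrix A is universal (i.e., for every analytic function φ the Jacobian of x ↦ x + φ(Ax) is identically a nonzero constant) if and only if A is one of the following forms for some a ∈ ℂ: [[0,a],[0,0]], [[0,0],[a,0]], or [[a,−a],[a,−a]]. -/
open Matrix BigOperators

/-! The Jacobian matrix of `x ↦ x + φ(Ax)` is `1 + diag(φ'(Ax)) A`, whose determinant for `2 × 2`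
matrices is `1 + d₀ a₀₀ + d₁ a₁₁ + d₀ d₁ det A` with `d = φ'(Ax)`. If `A` is universal, testing with
`φ z = z ^ (n + 1) / (n + 1)`, whose Jacobian at `0` is `1`, makes this expression equal to `1` for
`d = (Ax) ^ n` and every `x`. If `A` were invertible, `Ax = ± (1, 1)` would give `det A = 0`; so
`det A = 0`, and the basis vectors for `n = 1, 2` give three polynomial relations between the
entries whose solutions are exactly the three families. Conversely, in these families the diagonal
entries and the determinant vanish, except in the third one, where `a₀₀ = -a₁₁` but the two entries
of `Ax` coincide, so the expression is identically `1`. -/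

section Jacobian

variable {ι : Type*} [Fintype ι] [DecidableEq ι]

theorem hasFDerivAt_phiMap (A : Matrix ι ι ℂ) {φ : ℂ → ℂ} {x : ι → ℂ}
    (hφ : ∀ j, DifferentiableAt ℂ φ ((A *ᵥ x) j)) :
    HasFDerivAt (phiMap A φ)
      (toLin' (1 + diagonal (fun j => deriv φ ((A *ᵥ x) j)) * A)).toContinuousLinearMap x := by
  rw [hasFDerivAt_pi']
  intro j
  have hlin : HasFDerivAt (fun y : ι → ℂ => (A *ᵥ y) j)
      ((ContinuousLinearMap.proj j).comp (toLin' A).toContinuousLinearMap) x :=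
    ((ContinuousLinearMap.proj j).comp (toLin' A).toContinuousLinearMap).hasFDerivAt
  refine ((hasFDerivAt_apply j x).add ((hφ j).hasDerivAt.comp_hasFDerivAt x hlin)).congr_fderiv ?_
  ext h
  simp [-mulVec_mulVec, mulVec_diagonal]

theorem jacDet_phiMap (A : Matrix ι ι ℂ) {φ : ℂ → ℂ} {x : ι → ℂ}
    (hφ : ∀ j, DifferentiableAt ℂ φ ((A *ᵥ x) j)) :
    jacDet (phiMap A φ) x = det (1 + diagonal (fun j => deriv φ ((A *ᵥ x) j)) * A) := by
  rw [jacDet, (hasFDerivAt_phiMap A hφ).fderiv, LinearMap.toMatrix_eq_toMatrix']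
  simp only [LinearMap.coe_toContinuousLinearMap, LinearMap.toMatrix'_toLin']

theorem isUniversal_of_det_eq_one (A : Matrix ι ι ℂ)
    (h : ∀ (f : ℂ → ℂ) (x : ι → ℂ), det (1 + diagonal (fun j => f ((A *ᵥ x) j)) * A) = 1) :
    IsUniversal A := by
  intro Ω φ hΩ _ _ hφ _
  refine ⟨1, one_ne_zero, fun x hx => ?_⟩
  rw [jacDet_phiMap A fun j => (hΩ.analyticOn_iff_analyticOnNhd.mp hφ _ (hx j)).differentiableAt]
  exact h (deriv φ) x

theorem IsUniversal.det_one_add_diagonal_pow_mul {A : Matrix ι ι ℂ} (hA : IsUniversal A)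
    {n : ℕ} (hn : n ≠ 0) (x : ι → ℂ) :
    det (1 + diagonal (fun j => (A *ᵥ x) j ^ n) * A) = 1 := by
  set φ : ℂ → ℂ := fun z => z ^ (n + 1) / (n + 1)
  have hφ' (z : ℂ) : HasDerivAt φ (z ^ n) z := by
    have h := (hasDerivAt_pow (n + 1) z).div_const ((n : ℂ) + 1)
    rwa [Nat.add_sub_cancel, Nat.cast_succ, mul_div_cancel_left₀ _ n.cast_add_one_ne_zero] at h
  have hφ : Differentiable ℂ φ := fun z => (hφ' z).differentiableAt
  have hjac (y : ι → ℂ) :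
      jacDet (phiMap A φ) y = det (1 + diagonal (fun j => (A *ᵥ y) j ^ n) * A) := by
    simp only [jacDet_phiMap A fun j => hφ _, fun z => (hφ' z).deriv]
  obtain ⟨c, -, hc⟩ := hA Set.univ φ isOpen_univ Set.univ_nonempty isPreconnected_univ
    (hφ.differentiableOn.analyticOnNhd isOpen_univ).analyticOn ⟨0, fun _ => trivial⟩
  have hc0 : c = 1 := by
    rw [← hc 0 fun _ => trivial, hjac]
    simp [zero_pow hn]
  rw [← hjac, hc x fun _ => trivial, hc0]

end Jacobian

theorem det_one_add_diagonal_mul_fin_two {R : Type*} [CommRing R] (d : Fin 2 → R)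
    (A : Matrix (Fin 2) (Fin 2) R) :
    det (1 + diagonal d * A) = 1 + d 0 * A 0 0 + d 1 * A 1 1 + d 0 * d 1 * A.det := by
  rw [det_fin_two, det_fin_two]
  simp only [Matrix.add_apply, one_apply_eq, diagonal_mul, ne_eq, zero_ne_one, not_false_eq_true,
    one_apply_ne, zero_add, one_ne_zero]
  ring

theorem IsUniversal.det_eq_zero_of_fin_two {A : Matrix (Fin 2) (Fin 2) ℂ} (hA : IsUniversal A) :
    A.det = 0 := by
  by_contra hD
  have h (t : ℂ) : 1 + t * A 0 0 + t * A 1 1 + t * t * A.det = 1 := by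
    have := hA.det_one_add_diagonal_pow_mul one_ne_zero (A⁻¹ *ᵥ fun _ => t)
    rwa [mulVec_mulVec, mul_nonsing_inv _ (isUnit_iff_ne_zero.mpr hD), one_mulVec,
      det_one_add_diagonal_mul_fin_two, pow_one] at this
  exact hD (by linear_combination (h 1 + h (-1)) / 2)

theorem exists_eq_of_relations {R : Type*} [CommRing R] [NoZeroDivisors R] {p q r s : R}
    (hdet : p * s - q * r = 0) (hp : p * p + r * s = 0) (hs : q * p + s * s = 0)
    (hcube : p ^ 2 * p + r ^ 2 * s = 0) :
    ∃ a : R, !![p, q; r, s] = !![0, a; 0, 0] ∨ !![p, q; r, s] = !![0, 0; a, 0] ∨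
      !![p, q; r, s] = !![a, -a; a, -a] := by
  by_cases hr : r = 0
  · have hp0 : p = 0 := mul_self_eq_zero.mp (by linear_combination hp - s * hr)
    have hs0 : s = 0 := mul_self_eq_zero.mp (by linear_combination hs - q * hp0)
    exact ⟨q, Or.inl (by rw [hp0, hr, hs0])⟩
  by_cases hq : q = 0
  · have hs0 : s = 0 := mul_self_eq_zero.mp (by linear_combination hs - p * hq)
    have hp0 : p = 0 := mul_self_eq_zero.mp (by linear_combination hp - r * hs0)
    exact ⟨r, Or.inr (Or.inl (by rw [hp0, hq, hs0]))⟩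
  have hsq : s = q := by
    have : r ^ 2 * (s - q) = 0 := by linear_combination hcube - p * hp + r * hdet
    exact sub_eq_zero.mp ((mul_eq_zero.mp this).resolve_left (pow_ne_zero 2 hr))
  have hpq : p = -q := by
    have : q * (p + q) = 0 := by linear_combination hs - (s + q) * hsq
    exact eq_neg_of_add_eq_zero_left ((mul_eq_zero.mp this).resolve_left hq)
  have hrq : r = -q := by
    have : q * (r + q) = 0 := by linear_combination s * hpq - q * hsq - hdet
    exact eq_neg_of_add_eq_zero_left ((mul_eq_zero.mp this).resolve_left hq)
  exact ⟨p, Or.inr (Or.inr (by rw [hsq, hrq, hpq, neg_neg]))⟩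

theorem stmt6 (A : Matrix (Fin 2) (Fin 2) ℂ) :
    IsUniversal A ↔ ∃ a : ℂ,
      A = !![0, a; 0, 0] ∨ A = !![0, 0; a, 0] ∨ A = !![a, -a; a, -a] := by
  constructor
  · intro hA
    have hdet := hA.det_eq_zero_of_fin_two
    have h (n : ℕ) (hn : n ≠ 0) (j : Fin 2) :=
      (det_one_add_diagonal_mul_fin_two _ _).symm.trans
        (hA.det_one_add_diagonal_pow_mul hn (Pi.single j 1))
    have h1 := h 1 one_ne_zero 0
    have h2 := h 1 one_ne_zero 1
    have h3 := h 2 two_ne_zero 0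
    simp only [mulVec_single, MulOpposite.op_one, Pi.smul_apply, col_apply, one_smul, pow_one,
      add_assoc, hdet, mul_zero, add_zero, add_eq_left] at h1 h2 h3
    rw [eta_fin_two A]
    exact exists_eq_of_relations (by rwa [← det_fin_two]) h1 h2 h3
  · rintro ⟨a, rfl | rfl | rfl⟩ <;> refine isUniversal_of_det_eq_one _ fun f x => ?_ <;>
      simp [det_one_add_diagonal_mul_fin_two]
end

section
/- Every universal complex square matrix is nilpotent. -/
open Matrix BigOperators

/-! With `φ z = t * z` the map `x ↦ x + φ(Ax)` is the linear map `1 + t • A`, so universality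
forces `det (1 + t • A) ≠ 0` for every `t : ℂ`. An eigenvalue `μ ≠ 0` of `A` would make
`det (1 - μ⁻¹ • A)` vanish, hence `0` is the only eigenvalue, the characteristic polynomial of `A`
is `X ^ n`, and Cayley–Hamilton gives `A ^ n = 0`. -/

open Polynomial

namespace Matrix

variable {ι K : Type*} [Fintype ι] [DecidableEq ι] [Field K] [IsAlgClosed K]

theorem charpoly_eq_X_pow_of_forall_isRoot {A : Matrix ι ι K}
    (h : ∀ μ, A.charpoly.IsRoot μ → μ = 0) : A.charpoly = X ^ Fintype.card ι := by
  have hsplit : A.charpoly.Splits := IsAlgClosed.splits _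
  have hroots : A.charpoly.roots = Multiset.replicate (Fintype.card ι) 0 := by
    refine Multiset.eq_replicate.mpr ⟨?_, fun μ hμ => h μ (isRoot_of_mem_roots hμ)⟩
    rw [← A.charpoly_natDegree_eq_dim, splits_iff_card_roots.mp hsplit]
  rw [hsplit.eq_prod_roots_of_monic A.charpoly_monic, hroots]
  simp [Multiset.prod_replicate]

theorem isNilpotent_of_forall_isRoot_charpoly {A : Matrix ι ι K}
    (h : ∀ μ, A.charpoly.IsRoot μ → μ = 0) : IsNilpotent A :=
  ⟨Fintype.card ι, by simpa [charpoly_eq_X_pow_of_forall_isRoot h] using A.aeval_self_charpoly⟩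

theorem isNilpotent_of_forall_det_one_add_smul_ne_zero {A : Matrix ι ι K}
    (h : ∀ t : K, (1 + t • A).det ≠ 0) : IsNilpotent A := by
  refine isNilpotent_of_forall_isRoot_charpoly fun μ hμ => ?_
  by_contra hμ0
  have hrescale : 1 + (-μ⁻¹) • A = μ⁻¹ • (scalar ι μ - A) := by
    rw [smul_sub, scalar_apply, ← smul_one_eq_diagonal, smul_smul, inv_mul_cancel₀ hμ0,
      one_smul, neg_smul, sub_eq_add_neg]
  apply h (-μ⁻¹)
  rw [hrescale, det_smul, ← eval_charpoly, hμ.eq_zero, mul_zero]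

end Matrix

section Universal

variable {ι : Type*} [Fintype ι] [DecidableEq ι]

theorem phiMap_mul_left (A : Matrix ι ι ℂ) (t : ℂ) :
    phiMap A (t * ·) = toLin' (1 + t • A) := by
  funext x j
  simp [phiMap]

theorem jacDet_phiMap_mul_left (A : Matrix ι ι ℂ) (t : ℂ) (x : ι → ℂ) :
    jacDet (phiMap A (t * ·)) x = (1 + t • A).det := by
  rw [jacDet, phiMap_mul_left, ← LinearMap.coe_toContinuousLinearMap', ContinuousLinearMap.fderiv,
    LinearMap.toMatrix_eq_toMatrix', LinearMap.coe_toContinuousLinearMap,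
    LinearMap.toMatrix'_toLin']

theorem IsUniversal.det_one_add_smul_ne_zero {A : Matrix ι ι ℂ} (hA : IsUniversal A) (t : ℂ) :
    (1 + t • A).det ≠ 0 := by
  have hφ : AnalyticOn ℂ (t * ·) Set.univ := (analyticOnNhd_const.mul analyticOnNhd_id).analyticOn
  obtain ⟨c, hc, hjac⟩ := hA Set.univ (t * ·) isOpen_univ Set.univ_nonempty isPreconnected_univ
    hφ ⟨0, fun _ => trivial⟩
  rw [← jacDet_phiMap_mul_left A t 0, hjac 0 fun _ => trivial]
  exact hc

end Universal

theorem stmt11 (n : ℕ) (A : Matrix (Fin n) (Fin n) ℂ) (hA : IsUniversal A) :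
    IsNilpotent A :=
  Matrix.isNilpotent_of_forall_det_one_add_smul_ne_zero hA.det_one_add_smul_ne_zero
end

section
/- Fix integers n ≥ 2 and d ≥ 2, and s ∈ (ℂ*)ⁿ. Let H_{n,d}(s) be the n×n matrix with (j,k) entry s^{𝟙 − e_j + d e_k} = (∏_ℓ s_ℓ) · s_j^{−1} · s_k^{d}. If A is an n×n matrix such that x ↦ x + (Ax)^d has Jacobian identically 1, then x ↦ x + ((A ⊙ H_{n,d}(s))x)^d also has Jacobian identically 1, where ⊙ is the Hadamard (entrywise) product. -/
open Matrix BigOperators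

/-!
The Hadamard product with the rank-one matrix `H_{jk} = (c s_j⁻¹) s_k^d`, `c = ∏ s_ℓ`, is
`diag(u) A diag(v)` with `u = c s⁻¹`, `v = s^d`. Since `u_j^d v_j = c^d` does not depend on `j`,
choosing `μ` with `μ^(d-1) = c^d` makes the Jacobian matrix `1 + d diag((Bx)^(d-1)) B` of the new
map at `x` the conjugate by `diag(v)` of the Jacobian matrix of the old map at `ξ = μ (v ⊙ x)`.
-/

section

variable {ι : Type*} [Fintype ι] [DecidableEq ι]

theorem jacDet_eq_det_of_hasFDerivAt {f : (ι → ℂ) → ι → ℂ} {N : Matrix ι ι ℂ} {x : ι → ℂ}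
    (h : HasFDerivAt f (toLin' N).toContinuousLinearMap x) : jacDet f x = N.det := by
  rw [jacDet, h.fderiv, LinearMap.coe_toContinuousLinearMap, LinearMap.toMatrix_eq_toMatrix',
    LinearMap.toMatrix'_toLin']

theorem hasFDerivAt_add_mulVec_pow (d : ℕ) (M : Matrix ι ι ℂ) (x : ι → ℂ) :
    HasFDerivAt (fun y j => y j + (M *ᵥ y) j ^ (d + 1))
      (toLin' (1 + diagonal (fun j => (d + 1) * (M *ᵥ x) j ^ d) * M)).toContinuousLinearMap
      x := by
  refine hasFDerivAt_pi'' fun j => ?_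
  have hMj : HasFDerivAt (fun y : ι → ℂ => (M *ᵥ y) j)
      ((ContinuousLinearMap.proj j).comp (toLin' M).toContinuousLinearMap) x :=
    ((ContinuousLinearMap.proj j).comp (toLin' M).toContinuousLinearMap).hasFDerivAt
  refine ((hasFDerivAt_apply j x).add
    ((hasDerivAt_pow (d + 1) _).comp_hasFDerivAt x hMj)).congr_fderiv ?_
  ext v : 1
  simp [-mulVec_mulVec, mulVec_diagonal]

theorem jacDet_add_mulVec_pow (d : ℕ) (M : Matrix ι ι ℂ) (x : ι → ℂ) :
    jacDet (fun y j => y j + (M *ᵥ y) j ^ (d + 1)) x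
      = (1 + diagonal (fun j => (d + 1) * (M *ᵥ x) j ^ d) * M).det :=
  jacDet_eq_det_of_hasFDerivAt (hasFDerivAt_add_mulVec_pow d M x)

theorem Matrix.of_mul_mul_eq_diagonal_mul_mul_diagonal {α : Type*} [CommSemiring α]
    (A : Matrix ι ι α) (u v : ι → α) :
    of (fun j k => A j k * (u j * v k)) = diagonal u * A * diagonal v := by
  ext j k
  simp only [of_apply, mul_diagonal, diagonal_mul]
  ring

theorem jacDet_add_mulVec_pow_diagonal_mul_mul_diagonal (d : ℕ) (A : Matrix ι ι ℂ)
    {u v : ι → ℂ} {μ : ℂ} (hv : ∀ j, v j ≠ 0) (huv : ∀ j, u j ^ (d + 1) * v j = μ ^ d)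
    (x : ι → ℂ) :
    jacDet (fun y j => y j + ((diagonal u * A * diagonal v) *ᵥ y) j ^ (d + 1)) x
      = jacDet (fun y j => y j + (A *ᵥ y) j ^ (d + 1)) (μ • (v * x)) := by
  rw [jacDet_add_mulVec_pow, jacDet_add_mulVec_pow]
  set J := 1 + diagonal (fun j => (d + 1) * (A *ᵥ μ • (v * x)) j ^ d) * A
  have hconj : 1 + diagonal (fun j => (d + 1) * ((diagonal u * A * diagonal v) *ᵥ x) j ^ d)
      * (diagonal u * A * diagonal v) = diagonal v⁻¹ * J * diagonal v := by
    have hvx : diagonal v *ᵥ x = v * x := funext fun j => mulVec_diagonal v x j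
    ext j k
    have := hv j
    simp only [J, ← mulVec_mulVec, hvx, mulVec_smul, mulVec_diagonal, smul_eq_mul,
      Pi.smul_apply, mul_pow, Matrix.add_apply, one_apply, diagonal_mul, mul_diagonal, Pi.inv_apply,
      ← huv j]
    split_ifs with hjk
    · subst hjk
      field_simp
      ring
    · field_simp
      ring
  rw [hconj, det_mul, det_mul, det_diagonal, det_diagonal, Pi.inv_def, Finset.prod_inv_distrib,
    mul_comm, ← mul_assoc, mul_inv_cancel₀ (Finset.prod_ne_zero_iff.2 fun j _ => hv j), one_mul]

end

theorem stmt15_general (n : ℕ) (d : ℕ) (hd : 2 ≤ d) (s : Fin n → ℂ)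
    (hs : ∀ j, s j ≠ 0) (A : Matrix (Fin n) (Fin n) ℂ)
    (hjac : ∀ x : Fin n → ℂ, jacDet (fun y j => y j + (A.mulVec y j) ^ d) x = 1) :
    ∀ x : Fin n → ℂ,
      jacDet (fun y j => y j +
        ((Matrix.of fun j k : Fin n =>
          A j k * ((∏ ℓ, s ℓ) * (s j)⁻¹ * s k ^ d)).mulVec y j) ^ d) x = 1 := by
  intro x
  obtain ⟨e, rfl⟩ : ∃ e, d = e + 1 := ⟨d - 1, by omega⟩
  set c := ∏ ℓ, s ℓ
  obtain ⟨μ, hμ⟩ := IsAlgClosed.exists_pow_nat_eq (c ^ (e + 1)) (by omega : 0 < e)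
  have huv : ∀ j, (c * (s j)⁻¹) ^ (e + 1) * s j ^ (e + 1) = μ ^ e := fun j => by
    rw [← mul_pow, mul_assoc, inv_mul_cancel₀ (hs j), mul_one, hμ]
  rw [of_mul_mul_eq_diagonal_mul_mul_diagonal A (fun j => c * (s j)⁻¹) (fun k => s k ^ (e + 1)),
    jacDet_add_mulVec_pow_diagonal_mul_mul_diagonal e A (fun j => pow_ne_zero _ (hs j)) huv]
  exact hjac _

theorem stmt15 (n : ℕ) (hn : 2 ≤ n) (d : ℕ) (hd : 2 ≤ d) (s : Fin n → ℂ)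
    (hs : ∀ j, s j ≠ 0) (A : Matrix (Fin n) (Fin n) ℂ)
    (hjac : ∀ x : Fin n → ℂ, jacDet (fun y j => y j + (A.mulVec y j) ^ d) x = 1) :
    ∀ x : Fin n → ℂ,
      jacDet (fun y j => y j +
        ((Matrix.of fun j k : Fin n =>
          A j k * ((∏ ℓ, s ℓ) * (s j)⁻¹ * s k ^ d)).mulVec y j) ^ d) x = 1 :=
  stmt15_general n d hd s hs A hjac
end

section
/- Let d ∈ ℂ with d ∉ {0,1} (e.g., an integer d ≥ 2). A nonzero 2×2 complex matrix A forms a good pair with ζ ↦ ζ^d (i.e., the Jacobian of x ↦ x + (Ax)^d is identically 1) if and only if there exist (s,t) ∈ ℂ², not both zero, such that A = [[s t^d, −s^{d+1}], [t^{d+1}, −s^d t]] up to nonzero scalar multiple of the row interpretation; moreover for such A the inverse of f(x) = x + (Ax)^d is x = f − (Af)^d. -/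
open Matrix BigOperators

/-! The Jacobian matrix of `x ↦ x + (A x)^d` is `1 + diag(d (A x)^(d-1)) A`; for `2 × 2` matrices,
with `(u, v) = A x`, its determinant is
`1 + d (a₁₁ u^(d-1) + a₂₂ v^(d-1)) + d² (u v)^(d-1) det A`.
Replacing `x` by `l x` multiplies the two correction terms by `μ` and `μ²`, where `μ = l^(d-1)` takes
every complex value, so the Jacobian is identically `1` iff `det A = 0` and the first-order term
vanishes identically. Evaluating the latter at the basis vectors forces `A` to be the rank-one matrix
`(s, t)ᵀ (t^d, -s^d)`, with `t` a `(d+1)`-st root of `a₂₁`. For such `A` one has `A (A x)^d = 0`,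
so `A f(x) = A x` and `x = f(x) - (A f(x))^d`. -/

theorem hasFDerivAt_add_pow_mulVec {ι : Type*} [Fintype ι] [DecidableEq ι]
    (A : Matrix ι ι ℂ) (d : ℕ) (x : ι → ℂ) :
    HasFDerivAt (fun y j => y j + (A *ᵥ y) j ^ d)
      (LinearMap.toContinuousLinearMap
        (toLin' (1 + diagonal (fun j => d * (A *ᵥ x) j ^ (d - 1)) * A))) x := by
  rw [hasFDerivAt_pi']
  intro j
  have hrow := ((ContinuousLinearMap.proj j).comp
    (LinearMap.toContinuousLinearMap (toLin' A))).hasFDerivAt (x := x)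
  refine ((hasFDerivAt_apply j x).add (hrow.pow d)).congr_fderiv ?_
  ext v
  simp [mulVec_diagonal, -mulVec_mulVec]

theorem jacDet_add_pow_mulVec {ι : Type*} [Fintype ι] [DecidableEq ι]
    (A : Matrix ι ι ℂ) (d : ℕ) (x : ι → ℂ) :
    jacDet (fun y j => y j + (A *ᵥ y) j ^ d) x =
      (1 + diagonal (fun j => d * (A *ᵥ x) j ^ (d - 1)) * A).det := by
  rw [jacDet, (hasFDerivAt_add_pow_mulVec A d x).fderiv]
  simp [-toLin'_mul]

theorem jacDet_add_pow_mulVec_fin_two (A : Matrix (Fin 2) (Fin 2) ℂ) (d : ℕ) (x : Fin 2 → ℂ) :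
    jacDet (fun y j => y j + (A *ᵥ y) j ^ d) x =
      1 + d * (A 0 0 * (A *ᵥ x) 0 ^ (d - 1) + A 1 1 * (A *ᵥ x) 1 ^ (d - 1)) +
        d ^ 2 * ((A *ᵥ x) 0 * (A *ᵥ x) 1) ^ (d - 1) * A.det := by
  rw [jacDet_add_pow_mulVec, det_fin_two, det_fin_two]
  generalize A *ᵥ x = u
  simp [diagonal_mul]
  ring

theorem eq_zero_of_forall_mul_add_sq_mul_eq_zero {K : Type*} [Field K] [NeZero (2 : K)]
    {a b : K} (h : ∀ μ : K, μ * a + μ ^ 2 * b = 0) : a = 0 ∧ b = 0 := by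
  have h2a : 2 * a = 0 := by linear_combination h 1 - h (-1)
  have h2b : 2 * b = 0 := by linear_combination h 1 + h (-1)
  exact ⟨(mul_eq_zero.1 h2a).resolve_left two_ne_zero,
    (mul_eq_zero.1 h2b).resolve_left two_ne_zero⟩

theorem forall_jacDet_add_pow_mulVec_eq_one_iff {d : ℕ} (hd : 2 ≤ d)
    (A : Matrix (Fin 2) (Fin 2) ℂ) :
    (∀ x, jacDet (fun y j => y j + (A *ᵥ y) j ^ d) x = 1) ↔
      (∀ x, A 0 0 * (A *ᵥ x) 0 ^ (d - 1) + A 1 1 * (A *ᵥ x) 1 ^ (d - 1) = 0) ∧ A.det = 0 := by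
  simp only [jacDet_add_pow_mulVec_fin_two]
  have hd0 : (d : ℂ) ≠ 0 := by exact_mod_cast (by omega : d ≠ 0)
  constructor
  · intro h
    have hterms : ∀ x, A 0 0 * (A *ᵥ x) 0 ^ (d - 1) + A 1 1 * (A *ᵥ x) 1 ^ (d - 1) = 0 ∧
        ((A *ᵥ x) 0 * (A *ᵥ x) 1) ^ (d - 1) * A.det = 0 := by
      intro x
      obtain ⟨hP, hQ⟩ := eq_zero_of_forall_mul_add_sq_mul_eq_zero
        (a := d * (A 0 0 * (A *ᵥ x) 0 ^ (d - 1) + A 1 1 * (A *ᵥ x) 1 ^ (d - 1)))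
        (b := d ^ 2 * (((A *ᵥ x) 0 * (A *ᵥ x) 1) ^ (d - 1) * A.det)) fun μ => by
        obtain ⟨l, rfl⟩ := IsAlgClosed.exists_pow_nat_eq μ (by omega : 0 < d - 1)
        have hl := h (l • x)
        simp only [mulVec_smul, Pi.smul_apply, smul_eq_mul, mul_pow] at hl
        linear_combination hl
      exact ⟨(mul_eq_zero.1 hP).resolve_left hd0,
        (mul_eq_zero.1 hQ).resolve_left (pow_ne_zero 2 hd0)⟩
    refine ⟨fun x => (hterms x).1, ?_⟩
    by_contra hdet
    have hx : A *ᵥ (A⁻¹ *ᵥ ![1, 1]) = ![1, 1] := by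
      rw [mulVec_mulVec, mul_nonsing_inv _ (isUnit_iff_ne_zero.2 hdet), one_mulVec]
    have h11 := (hterms (A⁻¹ *ᵥ ![1, 1])).2
    rw [hx] at h11
    simp [hdet] at h11
  · rintro ⟨hP, hdet⟩ x
    rw [hP x, hdet]
    ring

def goodPowMatrix (d : ℕ) (s t : ℂ) : Matrix (Fin 2) (Fin 2) ℂ :=
  !![s * t ^ d, -(s ^ (d + 1)); t ^ (d + 1), -(s ^ d * t)]

theorem goodPowMatrix_mulVec (d : ℕ) (s t : ℂ) (x : Fin 2 → ℂ) :
    goodPowMatrix d s t *ᵥ x = (t ^ d * x 0 - s ^ d * x 1) • ![s, t] := by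
  ext i
  fin_cases i <;> simp [goodPowMatrix, mulVec, dotProduct, Fin.sum_univ_two] <;> ring

theorem det_goodPowMatrix (d : ℕ) (s t : ℂ) : (goodPowMatrix d s t).det = 0 := by
  rw [goodPowMatrix, det_fin_two_of]
  ring

theorem goodPowMatrix_diag_term_eq_zero {d : ℕ} (hd : 1 ≤ d) (s t : ℂ) (x : Fin 2 → ℂ) :
    goodPowMatrix d s t 0 0 * (goodPowMatrix d s t *ᵥ x) 0 ^ (d - 1) +
      goodPowMatrix d s t 1 1 * (goodPowMatrix d s t *ᵥ x) 1 ^ (d - 1) = 0 := by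
  obtain ⟨n, rfl⟩ : ∃ n, d = n + 1 := ⟨d - 1, by omega⟩
  rw [goodPowMatrix_mulVec]
  generalize t ^ (n + 1) * x 0 - s ^ (n + 1) * x 1 = w
  simp [goodPowMatrix, mul_pow]
  ring

theorem goodPowMatrix_mulVec_add_pow (d : ℕ) (s t : ℂ) (x : Fin 2 → ℂ) :
    goodPowMatrix d s t *ᵥ (fun i => x i + (goodPowMatrix d s t *ᵥ x) i ^ d) =
      goodPowMatrix d s t *ᵥ x := by
  rw [goodPowMatrix_mulVec, goodPowMatrix_mulVec]
  congr 1
  generalize hw : t ^ d * x 0 - s ^ d * x 1 = w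
  simp [mul_pow]
  linear_combination hw

theorem exists_eq_goodPowMatrix {d : ℕ} (hd : 2 ≤ d) (A : Matrix (Fin 2) (Fin 2) ℂ)
    (hP : ∀ x, A 0 0 * (A *ᵥ x) 0 ^ (d - 1) + A 1 1 * (A *ᵥ x) 1 ^ (d - 1) = 0)
    (hdet : A.det = 0) : ∃ s t, A = goodPowMatrix d s t := by
  obtain ⟨n, rfl⟩ : ∃ n, d = n + 2 := ⟨d - 2, by omega⟩
  have he₀ := hP (Pi.single 0 1)
  have he₁ := hP (Pi.single 1 1)
  simp only [mulVec_single_one, col_apply, show n + 2 - 1 = n + 1 from rfl] at he₀ he₁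
  rw [det_fin_two] at hdet
  by_cases h10 : A 1 0 = 0
  · have h00 : A 0 0 = 0 := pow_eq_zero_iff (n := n + 2) (by omega) |>.1 <| by
      rw [h10, zero_pow (by omega)] at he₀
      linear_combination he₀
    have h11 : A 1 1 = 0 := pow_eq_zero_iff (n := n + 2) (by omega) |>.1 <| by
      rw [h00, zero_mul, zero_add] at he₁
      linear_combination he₁
    obtain ⟨s, hs⟩ := IsAlgClosed.exists_pow_nat_eq (-A 0 1) (n := n + 3) (by omega)
    refine ⟨s, 0, ?_⟩
    rw [eta_fin_two A, goodPowMatrix, h00, h10, h11]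
    simp [hs]
  · obtain ⟨t, ht⟩ := IsAlgClosed.exists_pow_nat_eq (A 1 0) (n := n + 3) (by omega)
    have ht0 : t ≠ 0 := by
      rintro rfl
      exact h10 (by rw [← ht, zero_pow (by omega)])
    obtain ⟨s, hs⟩ : ∃ s, A 0 0 = s * t ^ (n + 2) :=
      ⟨A 0 0 / t ^ (n + 2), by field_simp⟩
    have h11 : A 1 1 = -(s ^ (n + 2) * t) := by
      have h : (A 1 1 + s ^ (n + 2) * t) * t ^ ((n + 3) * (n + 1)) = 0 := by
        rw [hs, ← ht] at he₀
        linear_combination he₀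
      linear_combination (mul_eq_zero.1 h).resolve_right (pow_ne_zero _ ht0)
    have h01 : A 0 1 = -(s ^ (n + 3)) := by
      have h : (A 0 1 + s ^ (n + 3)) * t ^ (n + 3) = 0 := by
        rw [hs, h11, ← ht] at hdet
        linear_combination -hdet
      linear_combination (mul_eq_zero.1 h).resolve_right (pow_ne_zero _ ht0)
    refine ⟨s, t, ?_⟩
    rw [eta_fin_two A, goodPowMatrix, hs, h01, ← ht, h11]

theorem stmt16 (d : ℕ) (hd : 2 ≤ d) (A : Matrix (Fin 2) (Fin 2) ℂ) (hA : A ≠ 0) :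
    ((∀ x : Fin 2 → ℂ, jacDet (fun y j => y j + (A.mulVec y j) ^ d) x = 1) ↔
      ∃ s t : ℂ, ¬(s = 0 ∧ t = 0) ∧
        A = !![s * t ^ d, -(s ^ (d + 1)); t ^ (d + 1), -(s ^ d * t)]) ∧
    ((∀ x : Fin 2 → ℂ, jacDet (fun y j => y j + (A.mulVec y j) ^ d) x = 1) →
      ∀ x : Fin 2 → ℂ, ∀ j,
        (x j + (A.mulVec x j) ^ d) -
          (A.mulVec (fun i => x i + (A.mulVec x i) ^ d) j) ^ d = x j) := by
  have hgood : (∀ x, jacDet (fun y j => y j + (A *ᵥ y) j ^ d) x = 1) ↔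
      ∃ s t, A = goodPowMatrix d s t := by
    rw [forall_jacDet_add_pow_mulVec_eq_one_iff hd]
    constructor
    · rintro ⟨hP, hdet⟩
      exact exists_eq_goodPowMatrix hd A hP hdet
    · rintro ⟨s, t, rfl⟩
      exact ⟨goodPowMatrix_diag_term_eq_zero (by omega) s t, det_goodPowMatrix d s t⟩
  have hst : ∀ s t, A = goodPowMatrix d s t → ¬(s = 0 ∧ t = 0) := by
    rintro s t rfl ⟨rfl, rfl⟩
    exact hA (by simp [goodPowMatrix, ← Matrix.ext_iff, Fin.forall_fin_two])
  refine ⟨hgood.trans ⟨fun ⟨s, t, h⟩ => ⟨s, t, hst s t h, h⟩, fun ⟨s, t, _, h⟩ => ⟨s, t, h⟩⟩,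
    fun h x j => ?_⟩
  obtain ⟨s, t, rfl⟩ := hgood.1 h
  rw [goodPowMatrix_mulVec_add_pow]
  ring
end

section
/- Let n ≥ 2, d ≥ 1 integers, c, v ∈ ℂⁿ, and let M = c ⊗ v be the rank-≤1 matrix with entries M_{jk} = c_j v_k. The map x ↦ x + (Mx)^d (entrywise d-th power) has Jacobian identically 1 if and only if ∑_{j=1}^n c_j^d v_j = 0. Moreover, in that case the inverse map is x = f − (Mf)^d. -/
open Matrix BigOperators

/-! Since `M = c vᵀ`, the map is `x ↦ x + ⟨v, x⟩ᵈ • cᵈ`, a rank-one perturbation of the identity.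
Its Jacobian matrix is `1 + d ⟨v, x⟩ᵈ⁻¹ cᵈ vᵀ`, whose determinant is `1 + d ⟨v, x⟩ᵈ⁻¹ ⟨v, cᵈ⟩` by the
matrix determinant lemma; this is identically `1` iff `⟨v, cᵈ⟩ = 0`. In that case `⟨v, ·⟩` is invariant
under the map, so `(M f(x))ᵈ = (M x)ᵈ` and subtracting it from `f(x)` recovers `x`. -/

section DotProduct

variable {𝕜 ι : Type*} [NontriviallyNormedField 𝕜] [Fintype ι]

noncomputable def dotProductCLM (v : ι → 𝕜) : (ι → 𝕜) →L[𝕜] 𝕜 :=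
  ∑ i, v i • ContinuousLinearMap.proj i

@[simp]
theorem dotProductCLM_apply (v y : ι → 𝕜) : dotProductCLM v y = v ⬝ᵥ y := by
  simp [dotProductCLM, dotProduct]

theorem hasFDerivAt_add_smul_dotProduct {g : 𝕜 → 𝕜} {g' : 𝕜} (v w x : ι → 𝕜)
    (hg : HasDerivAt g g' (v ⬝ᵥ x)) :
    HasFDerivAt (fun y => y + g (v ⬝ᵥ y) • w)
      (ContinuousLinearMap.id 𝕜 _ + (g' • dotProductCLM v).smulRight w) x := by
  have hdot : HasFDerivAt (fun y => v ⬝ᵥ y) (dotProductCLM v) x := by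
    convert (dotProductCLM v).hasFDerivAt (x := x) using 1
    exact funext fun y => (dotProductCLM_apply v y).symm
  exact (hasFDerivAt_id x).add ((hg.comp_hasFDerivAt x hdot).smul_const w)

end DotProduct

theorem exists_dotProduct_eq_one {K ι : Type*} [Field K] [Fintype ι] [DecidableEq ι]
    {v : ι → K} (hv : v ≠ 0) : ∃ x, v ⬝ᵥ x = 1 := by
  obtain ⟨i, hi⟩ := Function.ne_iff.mp hv
  exact ⟨Pi.single i (v i)⁻¹, by rw [dotProduct_single, mul_inv_cancel₀ hi]⟩

theorem jacDet_add_smul_dotProduct {ι : Type*} [Fintype ι] [DecidableEq ι] {g : ℂ → ℂ} {g' : ℂ}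
    (v w x : ι → ℂ) (hg : HasDerivAt g g' (v ⬝ᵥ x)) :
    jacDet (fun y => y + g (v ⬝ᵥ y) • w) x = 1 + g' * (v ⬝ᵥ w) := by
  rw [jacDet, (hasFDerivAt_add_smul_dotProduct v w x hg).fderiv,
    ContinuousLinearMap.toLinearMap_add, map_add, ContinuousLinearMap.coe_id, LinearMap.toMatrix_id,
    ContinuousLinearMap.coe_smulRight, LinearMap.toMatrix_smulRight, vecMulVec_eq Unit,
    det_one_add_replicateCol_mul_replicateRow]
  have hrow : ⇑(g' • dotProductCLM v) ∘ ⇑(Pi.basisFun ℂ ι) = g' • v := by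
    ext j; simp [dotProduct_single]
  rw [ContinuousLinearMap.coe_coe, hrow, smul_dotProduct, smul_eq_mul]
  rfl

theorem vecMulVec_mulVec_pow {R ι : Type*} [CommSemiring R] [Fintype ι] (c v y : ι → R) (d : ℕ) :
    (vecMulVec c v *ᵥ y) ^ d = (v ⬝ᵥ y) ^ d • c ^ d := by
  ext j
  simp [vecMulVec_mulVec, mul_pow, mul_comm]

theorem stmt17_general (n : ℕ) (d : ℕ) (hd : 1 ≤ d) (c v : Fin n → ℂ)
    (M : Matrix (Fin n) (Fin n) ℂ) (hM : M = Matrix.of fun j k : Fin n => c j * v k) :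
    ((∀ x : Fin n → ℂ, jacDet (fun y j => y j + (M.mulVec y j) ^ d) x = 1) ↔
      ∑ j, c j ^ d * v j = 0) ∧
    (∑ j, c j ^ d * v j = 0 →
      ∀ x : Fin n → ℂ, ∀ j,
        (x j + (M.mulVec x j) ^ d) -
          (M.mulVec (fun i => x i + (M.mulVec x i) ^ d) j) ^ d = x j) := by
  have hpow (y : Fin n → ℂ) : (M *ᵥ y) ^ d = (v ⬝ᵥ y) ^ d • c ^ d :=
    hM ▸ vecMulVec_mulVec_pow c v y d
  have hmap : (fun y j => y j + (M *ᵥ y) j ^ d) = fun y => y + (v ⬝ᵥ y) ^ d • c ^ d := by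
    funext y j
    rw [← hpow]
    rfl
  have hjac (x : Fin n → ℂ) : jacDet (fun y j => y j + (M *ᵥ y) j ^ d) x
      = 1 + d * (v ⬝ᵥ x) ^ (d - 1) * (v ⬝ᵥ c ^ d) := by
    rw [hmap, jacDet_add_smul_dotProduct v (c ^ d) x (hasDerivAt_pow d _), mul_assoc]
  rw [show ∑ j, c j ^ d * v j = v ⬝ᵥ c ^ d from dotProduct_comm _ _]
  refine ⟨⟨fun h => ?_, fun h x => by rw [hjac, h, mul_zero, add_zero]⟩, fun h x j => ?_⟩
  · by_contra hne
    obtain ⟨x, hx⟩ :=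
      exists_dotProduct_eq_one fun (hv : v = 0) => hne (by rw [hv, zero_dotProduct])
    have hx1 := h x
    rw [hjac, hx, one_pow, mul_one, add_eq_left, mul_eq_zero, Nat.cast_eq_zero] at hx1
    exact hx1.elim (by omega) hne
  · show (fun y j => y j + (M *ᵥ y) j ^ d) x j
        - ((M *ᵥ (fun y j => y j + (M *ᵥ y) j ^ d) x) ^ d) j = x j
    rw [hmap, hpow, dotProduct_add, dotProduct_smul, h, smul_zero, add_zero]
    simp

theorem stmt17 (n : ℕ) (hn : 2 ≤ n) (d : ℕ) (hd : 1 ≤ d) (c v : Fin n → ℂ)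
    (M : Matrix (Fin n) (Fin n) ℂ) (hM : M = Matrix.of fun j k : Fin n => c j * v k) :
    ((∀ x : Fin n → ℂ, jacDet (fun y j => y j + (M.mulVec y j) ^ d) x = 1) ↔
      ∑ j, c j ^ d * v j = 0) ∧
    (∑ j, c j ^ d * v j = 0 →
      ∀ x : Fin n → ℂ, ∀ j,
        (x j + (M.mulVec x j) ^ d) -
          (M.mulVec (fun i => x i + (M.mulVec x i) ^ d) j) ^ d = x j) :=
  stmt17_general n d hd c v M hM
end
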